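/- A quasi-monotonic surjection is uniquely determined by its zeros: if h, h' : [n] → [m] are quasi-monotonic surjective functions with h^{−1}(0) = h'^{−1}(0), then h = h'. -/
import Mathlib


/-- A function `f : [n] → [m]` is quasi-monotonic if `f 0 = 0` and `f` is strictly
monotonic outside the preimage of `0`. -/
def QuasiMonotonic {n m : ℕ} (f : Fin (n + 1) → Fin (m + 1)) : Prop :=
  f 0 = 0 ∧ ∀ p q : Fin (n + 1), p < q → f p ≠ 0 → f q ≠ 0 → f p < f q

/-- Key lemma: for a quasi-monotonic surjection `f`, if `f p ≠ 0` then `f p` equals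
the number of positions `q ≤ p` with `f q ≠ 0`. -/
lemma qm_key {n m : ℕ} (f : Fin (n + 1) → Fin (m + 1))
    (hqm : QuasiMonotonic f) (hs : Function.Surjective f)
    (p : Fin (n + 1)) (hp : f p ≠ 0) :
    (f p : ℕ) = (Finset.univ.filter (fun q => q ≤ p ∧ f q ≠ 0)).card := by
  have hcard : (Finset.univ.filter (fun q => q ≤ p ∧ f q ≠ 0)).card
      = (Finset.Ioc (0 : Fin (m+1)) (f p)).card := by
    apply Finset.card_bij (fun q _ => f q)
    · intro q hq
      simp only [Finset.mem_filter, Finset.mem_univ, true_and] at hq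
      rw [Finset.mem_Ioc]
      constructor
      · exact lt_of_le_of_ne (Fin.zero_le _) (Ne.symm hq.2)
      · rcases eq_or_lt_of_le hq.1 with rfl | hlt
        · exact le_refl _
        · exact le_of_lt (hqm.2 q p hlt hq.2 hp)
    · intro q hq q' hq' heq
      simp only [Finset.mem_filter, Finset.mem_univ, true_and] at hq hq'
      by_contra hne
      rcases lt_or_gt_of_ne hne with hlt | hlt
      · exact absurd heq (ne_of_lt (hqm.2 q q' hlt hq.2 hq'.2))
      · exact absurd heq.symm (ne_of_lt (hqm.2 q' q hlt hq'.2 hq.2))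
    · intro v hv
      rw [Finset.mem_Ioc] at hv
      obtain ⟨q, rfl⟩ := hs v
      refine ⟨q, ?_, rfl⟩
      simp only [Finset.mem_filter, Finset.mem_univ, true_and]
      refine ⟨?_, ne_of_gt hv.1⟩
      by_contra hq
      push_neg at hq
      exact absurd (hqm.2 p q hq hp (ne_of_gt hv.1)) (not_lt.mpr hv.2)
  rw [hcard, Fin.card_Ioc]
  simp

/-- a quasi-monotonic surjection is uniquely determined by its zeros. -/
theorem quasiMonotonic_surjective_ext (n m : ℕ)
    (h h' : Fin (n + 1) → Fin (m + 1))
    (hqm : QuasiMonotonic h) (hqm' : QuasiMonotonic h')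
    (hs : Function.Surjective h) (hs' : Function.Surjective h')
    (hz : h ⁻¹' {0} = h' ⁻¹' {0}) :
    h = h' := by
  have hz' : ∀ q, h q = 0 ↔ h' q = 0 := fun q => by
    constructor <;> intro hq
    · have := hz ▸ (Set.mem_preimage.mpr (by simp [hq] : h q ∈ ({0} : Set _)))
      simpa using this
    · have := hz.symm ▸ (Set.mem_preimage.mpr (by simp [hq] : h' q ∈ ({0} : Set _)))
      simpa using this
  funext p
  by_cases hp : h p = 0
  · rw [hp, ((hz' p).mp hp).symm]
  · have hp' : h' p ≠ 0 := fun c => hp ((hz' p).mpr c)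
    have e1 := qm_key h hqm hs p hp
    have e2 := qm_key h' hqm' hs' p hp'
    apply Fin.val_injective
    rw [e1, e2]
    congr 1
    ext q
    simp only [Finset.mem_filter, Finset.mem_univ, true_and]
    constructor <;> rintro ⟨h1, h2⟩
    · exact ⟨h1, fun c => h2 ((hz' q).mpr c)⟩
    · exact ⟨h1, fun c => h2 ((hz' q).mp c)⟩
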